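/- arXiv:2405.10722 — 3 statements merged into one kernel-verified Lean document; each statement's English description precedes it below -/
import Mathlib

section
/- For every natural number n, the eigenvalue of the hypersingular boundary integral operator on the unit sphere, λ_n(E)(k) = i·k³·h_n′(k)·j_n′(k), converges to −n(n+1)/(2n+1) as k → 0⁺; in particular for n = 0 this eigenvalue converges to 0, so the hypersingular operator becomes singular in the low-frequency limit. -/
open Real Complex Filter Topology

/-- The Rayleigh operator `f ↦ (x⁻¹ d/dx) f`. -/
noncomputable def sphStep (f : ℝ → ℝ) : ℝ → ℝ := fun x => deriv f x / x

/-- Spherical Bessel function of the first kind: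
`j_n(x) = (−x)^n (x⁻¹ d/dx)^n (sin x / x)`. -/
noncomputable def sphj (n : ℕ) (x : ℝ) : ℝ :=
  (-x) ^ n * (sphStep^[n] (fun t => Real.sin t / t)) x

/-- Spherical Bessel function of the second kind:
`y_n(x) = −(−x)^n (x⁻¹ d/dx)^n (cos x / x)`. -/
noncomputable def sphy (n : ℕ) (x : ℝ) : ℝ :=
  -((-x) ^ n * (sphStep^[n] (fun t => Real.cos t / t)) x)

/-- Spherical Hankel function of the first kind: `h_n = j_n + i y_n`. -/
noncomputable def sphh (n : ℕ) (x : ℝ) : ℂ :=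
  (sphj n x : ℂ) + Complex.I * (sphy n x : ℂ)

/-- Derivative `j_n′`. -/
noncomputable def sphj' (n : ℕ) (x : ℝ) : ℝ := deriv (sphj n) x

/-- Derivative `y_n′`. -/
noncomputable def sphy' (n : ℕ) (x : ℝ) : ℝ := deriv (sphy n) x

/-- Derivative `h_n′`. -/
noncomputable def sphh' (n : ℕ) (x : ℝ) : ℂ := deriv (sphh n) x

open intervalIntegral MeasureTheory

noncomputable def gInt (n : ℕ) (x : ℝ) : ℝ :=
  ((-1 : ℝ) ^ n / (2 ^ (n + 1) * (n.factorial : ℝ))) *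
    ∫ s in (-1 : ℝ)..1, (1 - s ^ 2) ^ n * Real.cos (x * s)

lemma contInt (n : ℕ) (x : ℝ) : Continuous (fun s : ℝ => (1 - s ^ 2) ^ n * Real.cos (x * s)) := by
  fun_prop

lemma contInt' (n : ℕ) (x : ℝ) :
    Continuous (fun s : ℝ => (1 - s ^ 2) ^ n * (-Real.sin (x * s) * s)) := by
  fun_prop

-- derivative under integral sign
lemma keyDeriv (n : ℕ) (x : ℝ) :
    HasDerivAt (fun y : ℝ => ∫ s in (-1 : ℝ)..1, (1 - s ^ 2) ^ n * Real.cos (y * s))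
      (∫ s in (-1 : ℝ)..1, (1 - s ^ 2) ^ n * (-Real.sin (x * s) * s)) x := by
  have h := intervalIntegral.hasDerivAt_integral_of_dominated_loc_of_deriv_le
    (F := fun y s => (1 - s ^ 2) ^ n * Real.cos (y * s))
    (F' := fun y s => (1 - s ^ 2) ^ n * (-Real.sin (y * s) * s))
    (x₀ := x) (a := -1) (b := 1) (μ := volume) (bound := fun _ => 1)
    (s := Metric.ball x 1) (Metric.ball_mem_nhds x one_pos)
    (Filter.Eventually.of_forall fun y => ((contInt n y).aestronglyMeasurable))
    ((contInt n x).intervalIntegrable _ _)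
    ((contInt' n x).aestronglyMeasurable)
    ?_ intervalIntegrable_const ?_
  · exact h.2
  · refine Filter.Eventually.of_forall fun t ht y _ => ?_
    rw [Set.uIoc_of_le (by norm_num : (-1:ℝ) ≤ 1)] at ht
    have ht1 : |t| ≤ 1 := by
      rw [abs_le]; exact ⟨le_of_lt ht.1, ht.2⟩
    have h2 : |1 - t ^ 2| ≤ 1 := by
      rw [abs_le]; constructor <;> nlinarith [sq_nonneg t, _root_.sq_abs t, abs_nonneg t]
    have := Real.abs_sin_le_one (y * t)
    calc ‖(1 - t ^ 2) ^ n * (-Real.sin (y * t) * t)‖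
        = |1 - t ^ 2| ^ n * (|Real.sin (y * t)| * |t|) := by
          rw [Real.norm_eq_abs, abs_mul, _root_.abs_pow, abs_mul, abs_neg]
      _ ≤ 1 ^ n * (1 * 1) := by
          gcongr
      _ = 1 := by norm_num
  · refine Filter.Eventually.of_forall fun t ht y _ => ?_
    have : HasDerivAt (fun y : ℝ => Real.cos (y * t)) (-Real.sin (y * t) * t) y :=
      by simpa [Function.comp_def] using (Real.hasDerivAt_cos (y * t)).comp y (hasDerivAt_mul_const t)
    exact this.const_mul _

-- antiderivative of s*(1-s^2)^n
lemma hasDerivAt_v (n : ℕ) (s : ℝ) :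
    HasDerivAt (fun s : ℝ => -(1 - s ^ 2) ^ (n + 1) / (2 * (n : ℝ) + 2))
      (s * (1 - s ^ 2) ^ n) s := by
  have h1 : HasDerivAt (fun s : ℝ => 1 - s ^ 2) (-(2 * s)) s := by
    simpa using ((hasDerivAt_pow 2 s).const_sub 1)
  have h2 : HasDerivAt (fun s : ℝ => (1 - s ^ 2) ^ (n + 1))
      (((n : ℝ) + 1) * (1 - s ^ 2) ^ n * (-(2 * s))) s := by
    simpa using h1.fun_pow (n + 1)
  have h3 := (h2.neg.div_const (2 * (n : ℝ) + 2))
  refine h3.congr_deriv ?_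
  have : (2 * (n : ℝ) + 2) ≠ 0 := by positivity
  rw [div_eq_iff this]
  ring

-- integration by parts: ∫ sin(x s) * (s (1-s²)^n) = (x/(2n+2)) ∫ (1-s²)^(n+1) cos(x s)
lemma ibp (n : ℕ) (x : ℝ) :
    (∫ s in (-1:ℝ)..1, Real.sin (x * s) * (s * (1 - s ^ 2) ^ n))
      = (x / (2 * (n : ℝ) + 2)) * ∫ s in (-1:ℝ)..1, (1 - s ^ 2) ^ (n + 1) * Real.cos (x * s) := by
  have hu : ∀ s ∈ Set.uIcc (-1:ℝ) 1, HasDerivAt (fun s => Real.sin (x * s))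
      (Real.cos (x * s) * x) s := fun s _ =>
    by simpa [Function.comp_def] using (Real.hasDerivAt_sin (x * s)).comp s ((hasDerivAt_id s).const_mul x)
  have hv : ∀ s ∈ Set.uIcc (-1:ℝ) 1, HasDerivAt
      (fun s : ℝ => -(1 - s ^ 2) ^ (n + 1) / (2 * (n : ℝ) + 2)) (s * (1 - s ^ 2) ^ n) s :=
    fun s _ => hasDerivAt_v n s
  have hiu : IntervalIntegrable (fun s : ℝ => Real.cos (x * s) * x) volume (-1) 1 :=
    (by fun_prop : Continuous fun s : ℝ => Real.cos (x * s) * x).intervalIntegrable _ _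
  have hiv : IntervalIntegrable (fun s : ℝ => s * (1 - s ^ 2) ^ n) volume (-1) 1 :=
    (by fun_prop : Continuous fun s : ℝ => s * (1 - s ^ 2) ^ n).intervalIntegrable _ _
  have H := intervalIntegral.integral_mul_deriv_eq_deriv_mul hu hv hiu hiv
  rw [H]
  norm_num
  rw [← intervalIntegral.integral_neg]
  rw [← intervalIntegral.integral_const_mul]
  apply intervalIntegral.integral_congr
  intro s _
  have : (2 * (n : ℝ) + 2) ≠ 0 := by positivity
  field_simp

lemma gInt_hasDerivAt (n : ℕ) (x : ℝ) :
    HasDerivAt (gInt n) (x * gInt (n + 1) x) x := by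
  have h := (keyDeriv n x).const_mul ((-1 : ℝ) ^ n / (2 ^ (n + 1) * (n.factorial : ℝ)))
  have e1 : (∫ s in (-1:ℝ)..1, (1 - s ^ 2) ^ n * (-Real.sin (x * s) * s))
      = -∫ s in (-1:ℝ)..1, Real.sin (x * s) * (s * (1 - s ^ 2) ^ n) := by
    rw [← intervalIntegral.integral_neg]
    apply intervalIntegral.integral_congr
    intro s _; ring
  have h2 : ((-1 : ℝ) ^ n / (2 ^ (n + 1) * (n.factorial : ℝ))) *
      (∫ s in (-1:ℝ)..1, (1 - s ^ 2) ^ n * (-Real.sin (x * s) * s)) = x * gInt (n + 1) x := by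
    rw [e1, ibp n x]
    unfold gInt
    have hfac : ((n + 1).factorial : ℝ) = ((n : ℝ) + 1) * (n.factorial : ℝ) := by
      rw [Nat.factorial_succ]; push_cast; ring
    rw [hfac]
    have h1 : ((n : ℝ) + 1) ≠ 0 := by positivity
    have h2 : (n.factorial : ℝ) ≠ 0 := Nat.cast_ne_zero.mpr n.factorial_ne_zero
    have h3 : (2 : ℝ) ^ (n + 1) ≠ 0 := by positivity
    field_simp
    ring
  rw [h2] at h
  exact h.congr_deriv rfl |>.congr_of_eventuallyEq (by
    filter_upwards with y
    unfold gInt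
    ring)

lemma gInt_zero (x : ℝ) (hx : x ≠ 0) : gInt 0 x = Real.sin x / x := by
  unfold gInt
  simp only [pow_zero, one_mul, Nat.factorial_zero, Nat.cast_one, mul_one, pow_one]
  have : (∫ s in (-1:ℝ)..1, Real.cos (x * s)) = x⁻¹ • ∫ s in (-x)..x, Real.cos s := by
    rw [intervalIntegral.integral_comp_mul_left Real.cos hx]
    norm_num
  rw [this, smul_eq_mul, integral_cos, Real.sin_neg]
  field_simp
  ring

-- value recursion at 0
lemma I_rec (n : ℕ) :
    (∫ s in (-1:ℝ)..1, (1 - s ^ 2) ^ (n + 1))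
      = ((2 * (n : ℝ) + 2) / (2 * (n : ℝ) + 3)) * ∫ s in (-1:ℝ)..1, (1 - s ^ 2) ^ n := by
  have hu : ∀ s ∈ Set.uIcc (-1:ℝ) 1, HasDerivAt (fun s : ℝ => s) 1 s := fun s _ => hasDerivAt_id s
  have hv : ∀ s ∈ Set.uIcc (-1:ℝ) 1, HasDerivAt
      (fun s : ℝ => -(1 - s ^ 2) ^ (n + 1) / (2 * (n : ℝ) + 2)) (s * (1 - s ^ 2) ^ n) s :=
    fun s _ => hasDerivAt_v n s
  have hiu : IntervalIntegrable (fun _ : ℝ => (1:ℝ)) volume (-1) 1 := intervalIntegrable_const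
  have hiv : IntervalIntegrable (fun s : ℝ => s * (1 - s ^ 2) ^ n) volume (-1) 1 :=
    (by fun_prop : Continuous fun s : ℝ => s * (1 - s ^ 2) ^ n).intervalIntegrable _ _
  have H := intervalIntegral.integral_mul_deriv_eq_deriv_mul hu hv hiu hiv
  -- H : ∫ s * (s (1-s²)^n) = [s * v] - ∫ 1 * v
  have h2 : (∫ s in (-1:ℝ)..1, s * (s * (1 - s ^ 2) ^ n))
      = (∫ s in (-1:ℝ)..1, (1 - s ^ 2) ^ (n + 1)) / (2 * (n : ℝ) + 2) := by
    rw [H]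
    have e1 : ∀ s ∈ Set.uIcc (-1:ℝ) 1, (fun s : ℝ => 1 * (-(1 - s ^ 2) ^ (n + 1) / (2 * (n:ℝ) + 2))) s
        = (fun s : ℝ => -((1 - s ^ 2) ^ (n + 1) / (2 * (n:ℝ) + 2))) s := by
      intro s _; ring
    rw [intervalIntegral.integral_congr e1, intervalIntegral.integral_neg,
      intervalIntegral.integral_div]
    norm_num
  have h3 : (∫ s in (-1:ℝ)..1, (1 - s ^ 2) ^ (n + 1))
      = (∫ s in (-1:ℝ)..1, (1 - s ^ 2) ^ n) - ∫ s in (-1:ℝ)..1, s * (s * (1 - s ^ 2) ^ n) := by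
    rw [← intervalIntegral.integral_sub
      ((by fun_prop : Continuous fun s : ℝ => (1 - s ^ 2) ^ n).intervalIntegrable _ _)
      ((by fun_prop : Continuous fun s : ℝ => s * (s * (1 - s ^ 2) ^ n)).intervalIntegrable _ _)]
    apply intervalIntegral.integral_congr
    intro s _
    ring
  have hne : (2 * (n : ℝ) + 2) ≠ 0 := by positivity
  have hne3 : (2 * (n : ℝ) + 3) ≠ 0 := by positivity
  rw [h2] at h3
  field_simp at h3 ⊢
  linarith

lemma gInt_zero_val : gInt 0 0 = 1 := by
  unfold gInt
  norm_num

lemma gInt_zero_rec (n : ℕ) : (2 * (n : ℝ) + 3) * gInt (n + 1) 0 = -gInt n 0 := by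
  unfold gInt
  simp only [zero_mul, Real.cos_zero, mul_one]
  rw [I_rec n]
  have hfac : ((n + 1).factorial : ℝ) = ((n : ℝ) + 1) * (n.factorial : ℝ) := by
    rw [Nat.factorial_succ]; push_cast; ring
  rw [hfac]
  have h1 : ((n : ℝ) + 1) ≠ 0 := by positivity
  have h2 : (n.factorial : ℝ) ≠ 0 := Nat.cast_ne_zero.mpr n.factorial_ne_zero
  have h3 : (2 : ℝ) ^ (n + 1) ≠ 0 := by positivity
  have hne3 : (2 * (n : ℝ) + 3) ≠ 0 := by positivity
  field_simp
  ring

noncomputable def cdP : ℕ → Polynomial ℝ × Polynomial ℝ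
  | 0 => (0, 1)
  | n + 1 =>
    (Polynomial.X * (Polynomial.derivative (cdP n).1 - (cdP n).2)
        - Polynomial.C (2 * (n : ℝ) + 1) * (cdP n).1,
     Polynomial.X * (Polynomial.derivative (cdP n).2 + (cdP n).1)
        - Polynomial.C (2 * (n : ℝ) + 1) * (cdP n).2)

noncomputable def rFun (n : ℕ) (x : ℝ) : ℝ :=
  ((cdP n).1.eval x * Real.sin x + (cdP n).2.eval x * Real.cos x) / x ^ (2 * n + 1)

lemma rFun_hasDerivAt (n : ℕ) {x : ℝ} (hx : x ≠ 0) :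
    HasDerivAt (rFun n) (x * rFun (n + 1) x) x := by
  have hN : HasDerivAt (fun x : ℝ => (cdP n).1.eval x * Real.sin x + (cdP n).2.eval x * Real.cos x)
      ((Polynomial.derivative (cdP n).1).eval x * Real.sin x + (cdP n).1.eval x * Real.cos x
        + ((Polynomial.derivative (cdP n).2).eval x * Real.cos x
          + (cdP n).2.eval x * (-Real.sin x))) x := by
    exact (((cdP n).1.hasDerivAt x).mul (Real.hasDerivAt_sin x)).add
      (((cdP n).2.hasDerivAt x).mul (Real.hasDerivAt_cos x))
  have hD : HasDerivAt (fun x : ℝ => x ^ (2 * n + 1))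
      ((2 * (n : ℝ) + 1) * x ^ (2 * n)) x := by
    simpa using hasDerivAt_pow (2 * n + 1) x
  have h := hN.div hD (pow_ne_zero _ hx)
  apply h.congr_deriv
  have hxp : x ^ (2 * n + 1) ≠ 0 := pow_ne_zero _ hx
  have hxp2 : x ^ (2 * n) ≠ 0 := pow_ne_zero _ hx
  have hxp3 : x ^ (2 * (n + 1) + 1) ≠ 0 := pow_ne_zero _ hx
  unfold rFun
  show _ = x * (((cdP (n+1)).1.eval x * Real.sin x + (cdP (n+1)).2.eval x * Real.cos x)
      / x ^ (2 * (n + 1) + 1))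
  simp only [cdP, Polynomial.eval_sub, Polynomial.eval_mul, Polynomial.eval_add,
    Polynomial.eval_X, Polynomial.eval_C]
  have e1 : 2 * (n + 1) + 1 = (2 * n + 1) + 2 := by ring
  rw [e1]
  field_simp
  ring

lemma mem_ne_nhds {x : ℝ} (hx : x ≠ 0) : {y : ℝ | y ≠ 0} ∈ 𝓝 x :=
  isOpen_ne.mem_nhds hx

lemma sphStep_sin (n : ℕ) : ∀ x : ℝ, x ≠ 0 →
    (sphStep^[n] (fun t => Real.sin t / t)) x = gInt n x := by
  induction n with
  | zero => intro x hx; simp [gInt_zero x hx]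
  | succ n ih =>
    intro x hx
    rw [Function.iterate_succ_apply']
    show deriv (sphStep^[n] fun t => Real.sin t / t) x / x = _
    have hev : (sphStep^[n] fun t => Real.sin t / t) =ᶠ[𝓝 x] gInt n := by
      filter_upwards [mem_ne_nhds hx] with y hy using ih y hy
    rw [hev.deriv_eq, (gInt_hasDerivAt n x).deriv]
    field_simp

lemma rFun_zero (x : ℝ) (hx : x ≠ 0) : rFun 0 x = Real.cos x / x := by
  unfold rFun
  simp [cdP]

lemma sphStep_cos (n : ℕ) : ∀ x : ℝ, x ≠ 0 →
    (sphStep^[n] (fun t => Real.cos t / t)) x = rFun n x := by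
  induction n with
  | zero => intro x hx; simp [rFun_zero x hx]
  | succ n ih =>
    intro x hx
    rw [Function.iterate_succ_apply']
    show deriv (sphStep^[n] fun t => Real.cos t / t) x / x = _
    have hev : (sphStep^[n] fun t => Real.cos t / t) =ᶠ[𝓝 x] rFun n := by
      filter_upwards [mem_ne_nhds hx] with y hy using ih y hy
    rw [hev.deriv_eq, (rFun_hasDerivAt n hx).deriv]
    field_simp

noncomputable def jd (n : ℕ) (x : ℝ) : ℝ :=
  (-1 : ℝ) ^ n * ((n : ℝ) * x ^ (n - 1) * gInt n x + x ^ n * (x * gInt (n + 1) x))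
noncomputable def yd (n : ℕ) (x : ℝ) : ℝ :=
  -((-1 : ℝ) ^ n * ((n : ℝ) * x ^ (n - 1) * rFun n x + x ^ n * (x * rFun (n + 1) x)))

lemma sphj_hasDerivAt (n : ℕ) {x : ℝ} (hx : x ≠ 0) : HasDerivAt (sphj n) (jd n x) x := by
  have hmod : HasDerivAt (fun t : ℝ => (-1 : ℝ) ^ n * (t ^ n * gInt n t)) (jd n x) x := by
    exact ((hasDerivAt_pow n x).mul (gInt_hasDerivAt n x)).const_mul _
  apply hmod.congr_of_eventuallyEq
  filter_upwards [mem_ne_nhds hx] with y hy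
  unfold sphj
  rw [sphStep_sin n y hy, neg_pow]
  ring

lemma sphy_hasDerivAt (n : ℕ) {x : ℝ} (hx : x ≠ 0) : HasDerivAt (sphy n) (yd n x) x := by
  have hmod : HasDerivAt (fun t : ℝ => -((-1 : ℝ) ^ n * (t ^ n * rFun n t))) (yd n x) x := by
    exact (((hasDerivAt_pow n x).mul (rFun_hasDerivAt n hx)).const_mul ((-1:ℝ)^n)).neg
  apply hmod.congr_of_eventuallyEq
  filter_upwards [mem_ne_nhds hx] with y hy
  unfold sphy
  rw [sphStep_cos n y hy, neg_pow]
  ring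

lemma sphj'_eq (n : ℕ) {x : ℝ} (hx : x ≠ 0) : sphj' n x = jd n x :=
  (sphj_hasDerivAt n hx).deriv

lemma sphh'_eq (n : ℕ) {x : ℝ} (hx : x ≠ 0) :
    sphh' n x = (jd n x : ℂ) + Complex.I * (yd n x : ℂ) := by
  have h : HasDerivAt (sphh n) ((jd n x : ℂ) + Complex.I * (yd n x : ℂ)) x :=
    (sphj_hasDerivAt n hx).ofReal_comp.add
      (((sphy_hasDerivAt n hx).ofReal_comp).const_mul Complex.I)
  exact h.deriv

noncomputable def NumC (n : ℕ) (x : ℝ) : ℝ :=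
  (cdP n).1.eval x * Real.sin x + (cdP n).2.eval x * Real.cos x

lemma Num_eq (n : ℕ) {x : ℝ} (hx : x ≠ 0) : x ^ (2 * n + 1) * rFun n x = NumC n x := by
  unfold rFun NumC
  field_simp

-- key algebraic identities for k ≠ 0
lemma keyA (n : ℕ) {k : ℝ} (hk : k ≠ 0) :
    k ^ 3 * jd n k ^ 2
      = k ^ (2 * n + 1) * ((n : ℝ) * gInt n k + k ^ 2 * gInt (n + 1) k) ^ 2 := by
  unfold jd
  rcases n with _ | m
  · simp; ring
  · simp only [Nat.succ_sub_one, Nat.cast_succ]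
    have h1 : ((-1:ℝ)) ^ (m * 2) = 1 := by
      rw [pow_mul]
      rcases neg_one_pow_eq_or ℝ m with h | h <;> rw [h] <;> norm_num
    ring_nf
    simp only [h1, mul_one, one_mul]

lemma keyB (n : ℕ) {k : ℝ} (hk : k ≠ 0) :
    -(k ^ 3 * yd n k * jd n k)
      = ((n : ℝ) * NumC n k + k ^ (2 * (n + 1) + 1) * rFun (n + 1) k)
        * ((n : ℝ) * gInt n k + k ^ 2 * gInt (n + 1) k) := by
  rw [← Num_eq n hk]
  unfold jd yd
  rcases n with _ | m
  · simp; ring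
  · simp only [Nat.succ_sub_one, Nat.cast_succ]
    have h1 : ((-1:ℝ)) ^ (m * 2) = 1 := by
      rw [pow_mul]
      rcases neg_one_pow_eq_or ℝ m with h | h <;> rw [h] <;> norm_num
    ring_nf
    simp only [h1, mul_one, one_mul]

noncomputable def Qv (n : ℕ) : ℝ := ((cdP n).2).eval 0
noncomputable def Jv (n : ℕ) : ℝ := gInt n 0

lemma Qv_zero : Qv 0 = 1 := by simp [Qv, cdP]
lemma Qv_succ (n : ℕ) : Qv (n + 1) = -(2 * (n : ℝ) + 1) * Qv n := by
  simp [Qv, cdP]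
  ring

lemma QJ (n : ℕ) : Qv n * Jv n = 1 / (2 * (n : ℝ) + 1) := by
  induction n with
  | zero => simp [Qv_zero, Jv, gInt_zero_val]
  | succ n ih =>
    have h3 : (2 * (n : ℝ) + 3) ≠ 0 := by positivity
    have hJ : Jv (n + 1) = -Jv n / (2 * (n : ℝ) + 3) := by
      have h := gInt_zero_rec n
      show gInt (n+1) 0 = _
      rw [eq_div_iff h3]
      show gInt (n+1) 0 * _ = -gInt n 0
      linarith [h]
    have h1 : (2 * (n : ℝ) + 1) ≠ 0 := by positivity
    have he : -(2 * (n : ℝ) + 1) * Qv n * (-Jv n / (2 * (n:ℝ) + 3))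
        = (2 * (n:ℝ) + 1) / (2 * (n:ℝ) + 3) * (Qv n * Jv n) := by
      field_simp
    rw [Qv_succ, hJ, he, ih]
    push_cast
    field_simp
    ring

-- continuity limits
lemma tendsto_NumC (n : ℕ) : Tendsto (fun k : ℝ => NumC n k) (𝓝[>] 0) (𝓝 (Qv n)) := by
  have hc : Continuous (fun k : ℝ => NumC n k) := by
    unfold NumC; fun_prop
  have h0 : NumC n 0 = Qv n := by simp [NumC, Qv]
  rw [← h0]
  exact (hc.tendsto 0).mono_left nhdsWithin_le_nhds

lemma tendsto_gInt (m : ℕ) : Tendsto (gInt m) (𝓝[>] 0) (𝓝 (Jv m)) :=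
  ((gInt_hasDerivAt m 0).continuousAt.tendsto).mono_left nhdsWithin_le_nhds

lemma tendsto_pow_rFun (n : ℕ) :
    Tendsto (fun k : ℝ => k ^ (2 * (n + 1) + 1) * rFun (n + 1) k) (𝓝[>] 0) (𝓝 (Qv (n + 1))) := by
  apply (tendsto_NumC (n + 1)).congr'
  filter_upwards [self_mem_nhdsWithin] with k (hk : (0:ℝ) < k)
  exact (Num_eq (n + 1) (ne_of_gt hk)).symm

lemma tendsto_G (n : ℕ) :
    Tendsto (fun k : ℝ => (n : ℝ) * gInt n k + k ^ 2 * gInt (n + 1) k) (𝓝[>] 0)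
      (𝓝 ((n : ℝ) * Jv n)) := by
  have h2 : Tendsto (fun k : ℝ => k ^ 2 * gInt (n + 1) k) (𝓝[>] 0) (𝓝 (0 * Jv (n + 1))) := by
    refine Tendsto.mul ?_ (tendsto_gInt (n + 1))
    have := ((continuous_pow 2).tendsto (0:ℝ)).mono_left (nhdsWithin_le_nhds (s := Set.Ioi (0:ℝ)))
    simpa using this
  simpa using ((tendsto_gInt n).const_mul ((n:ℝ))).add h2

lemma tendsto_A (n : ℕ) :
    Tendsto (fun k : ℝ => k ^ (2 * n + 1) * ((n : ℝ) * gInt n k + k ^ 2 * gInt (n + 1) k) ^ 2)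
      (𝓝[>] 0) (𝓝 0) := by
  have h1 : Tendsto (fun k : ℝ => k ^ (2 * n + 1)) (𝓝[>] 0) (𝓝 0) := by
    have := ((continuous_pow (2 * n + 1)).tendsto (0:ℝ)).mono_left
      (nhdsWithin_le_nhds (s := Set.Ioi (0:ℝ)))
    simpa [zero_pow (Nat.succ_ne_zero _)] using this
  have := h1.mul ((tendsto_G n).pow 2)
  simpa using this

lemma tendsto_B (n : ℕ) :
    Tendsto (fun k : ℝ => ((n : ℝ) * NumC n k + k ^ (2 * (n + 1) + 1) * rFun (n + 1) k)
        * ((n : ℝ) * gInt n k + k ^ 2 * gInt (n + 1) k))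
      (𝓝[>] 0) (𝓝 (-((n : ℝ) * ((n : ℝ) + 1) / (2 * (n : ℝ) + 1)))) := by
  have hlim := (((tendsto_NumC n).const_mul ((n:ℝ))).add (tendsto_pow_rFun n)).mul (tendsto_G n)
  have hval : ((n : ℝ) * Qv n + Qv (n + 1)) * ((n : ℝ) * Jv n)
      = -((n : ℝ) * ((n : ℝ) + 1) / (2 * (n : ℝ) + 1)) := by
    rw [Qv_succ]
    have hqj := QJ n
    have h1 : (2 * (n : ℝ) + 1) ≠ 0 := by positivity
    have : ((n:ℝ) * Qv n + -(2 * (n:ℝ) + 1) * Qv n) * ((n:ℝ) * Jv n)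
        = -((n:ℝ) + 1) * (n:ℝ) * (Qv n * Jv n) := by ring
    rw [this, hqj]
    field_simp
  rw [← hval]
  exact hlim

/-- λ_n(E)(k) = i·k³·h_n′(k)·j_n′(k) → −n(n+1)/(2n+1) as k → 0⁺. -/
theorem hypersingular_eigenvalue_limit (n : ℕ) :
    Filter.Tendsto
      (fun k : ℝ => Complex.I * (k : ℂ) ^ 3 * sphh' n k * (sphj' n k : ℂ))
      (𝓝[>] (0 : ℝ)) (𝓝 (-((n : ℂ) * ((n : ℂ) + 1) / (2 * (n : ℂ) + 1)))) := by
  set A : ℝ → ℝ := fun k =>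
    k ^ (2 * n + 1) * ((n : ℝ) * gInt n k + k ^ 2 * gInt (n + 1) k) ^ 2 with hA
  set B : ℝ → ℝ := fun k =>
    ((n : ℝ) * NumC n k + k ^ (2 * (n + 1) + 1) * rFun (n + 1) k)
      * ((n : ℝ) * gInt n k + k ^ 2 * gInt (n + 1) k) with hB
  have hmain : Tendsto (fun k : ℝ => Complex.I * ((A k : ℝ) : ℂ) + ((B k : ℝ) : ℂ))
      (𝓝[>] (0:ℝ))
      (𝓝 (Complex.I * ((0 : ℝ) : ℂ) + ((-((n : ℝ) * ((n : ℝ) + 1) / (2 * (n : ℝ) + 1)) : ℝ) : ℂ))) := by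
    refine Tendsto.add ?_ ?_
    · exact ((Complex.continuous_ofReal.tendsto _).comp (tendsto_A n)).const_mul _
    · exact (Complex.continuous_ofReal.tendsto _).comp (tendsto_B n)
  have hval : Complex.I * ((0 : ℝ) : ℂ) + ((-((n : ℝ) * ((n : ℝ) + 1) / (2 * (n : ℝ) + 1)) : ℝ) : ℂ)
      = -((n : ℂ) * ((n : ℂ) + 1) / (2 * (n : ℂ) + 1)) := by
    push_cast
    ring
  rw [hval] at hmain
  apply hmain.congr'
  filter_upwards [self_mem_nhdsWithin] with k (hk : (0:ℝ) < k)
  have hk' : k ≠ 0 := ne_of_gt hk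
  rw [sphh'_eq n hk', sphj'_eq n hk']
  rw [hA, hB]
  simp only
  rw [← keyA n hk', ← keyB n hk']
  push_cast
  ring_nf
  rw [Complex.I_sq]
  ring
end

section
/- For every natural number n and every real k ≠ 0, the Wronskian identity j_n(k)·h_n′(k) − j_n′(k)·h_n(k) = i/k² holds. -/
open Real Complex Filter Topology

open scoped ContDiff

namespace SphAux

def S : Set ℝ := {(0:ℝ)}ᶜ
lemma isOpen_S : IsOpen S := isOpen_compl_singleton
lemma mem_S {x : ℝ} (hx : x ≠ 0) : x ∈ S := hx

lemma diffAt {F : ℝ → ℝ} (hF : ContDiffOn ℝ ∞ F S) {x : ℝ} (hx : x ≠ 0) :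
    DifferentiableAt ℝ F x :=
  ((hF.differentiableOn (by simp)).differentiableAt
    (isOpen_S.mem_nhds (mem_S hx)))

lemma derivCD {F : ℝ → ℝ} (hF : ContDiffOn ℝ ∞ F S) : ContDiffOn ℝ ∞ (deriv F) S :=
  hF.deriv_of_isOpen isOpen_S le_rfl

lemma smooth_step {F : ℝ → ℝ} (hF : ContDiffOn ℝ ∞ F S) :
    ContDiffOn ℝ ∞ (sphStep F) S :=
  (derivCD hF).div contDiffOn_id (fun _ hx => hx)

lemma hasDerivAt_sphStep {F : ℝ → ℝ} (hF : ContDiffOn ℝ ∞ F S) {x : ℝ} (hx : x ≠ 0) :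
    HasDerivAt (sphStep F) ((deriv (deriv F) x * x - deriv F x) / x ^ 2) x := by
  have h1 : HasDerivAt (deriv F) (deriv (deriv F) x) x :=
    (diffAt (derivCD hF) hx).hasDerivAt
  have := h1.div (hasDerivAt_id x) hx
  unfold sphStep; simpa [sq, Pi.div_def] using this

def ODE (m : ℝ) (F : ℝ → ℝ) : Prop :=
  ∀ x : ℝ, x ≠ 0 → deriv (deriv F) x = -(m / x) * deriv F x - F x

lemma d3_of_ODE {m : ℝ} {F : ℝ → ℝ} (hF : ContDiffOn ℝ ∞ F S) (hO : ODE m F)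
    {x : ℝ} (hx : x ≠ 0) :
    deriv (deriv (deriv F)) x
      = m / x ^ 2 * deriv F x - m / x * deriv (deriv F) x - deriv F x := by
  have heq : deriv (deriv F) =ᶠ[𝓝 x] fun y => -(m / y) * deriv F y - F y := by
    filter_upwards [isOpen_S.mem_nhds (mem_S hx)] with y hy
    exact hO y hy
  rw [heq.deriv_eq]
  have h1 : HasDerivAt (fun y : ℝ => -(m / y)) (m / x ^ 2) x := by
    have := ((hasDerivAt_inv hx).const_mul m).neg
    simpa [div_eq_mul_inv, Pi.neg_def] using this
  have h2 : HasDerivAt (deriv F) (deriv (deriv F) x) x := (diffAt (derivCD hF) hx).hasDerivAt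
  have h3 : HasDerivAt F (deriv F x) x := (diffAt hF hx).hasDerivAt
  have := (h1.mul h2).sub h3
  rw [(show HasDerivAt (fun y => -(m / y) * deriv F y - F y) _ x from this).deriv]; ring

lemma ODE_step {m : ℝ} {F : ℝ → ℝ} (hF : ContDiffOn ℝ ∞ F S) (hO : ODE m F) :
    ODE (m + 2) (sphStep F) := by
  intro x hx
  have heq : deriv (sphStep F) =ᶠ[𝓝 x]
      fun y => (deriv (deriv F) y * y - deriv F y) / y ^ 2 := by
    filter_upwards [isOpen_S.mem_nhds (mem_S hx)] with y hy
    exact (hasDerivAt_sphStep hF hy).deriv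
  rw [heq.deriv_eq]
  have h2 : HasDerivAt (deriv F) (deriv (deriv F) x) x := (diffAt (derivCD hF) hx).hasDerivAt
  have h3 : HasDerivAt (deriv (deriv F)) (deriv (deriv (deriv F)) x) x :=
    (diffAt (derivCD (derivCD hF)) hx).hasDerivAt
  have hN : HasDerivAt (fun y => deriv (deriv F) y * y - deriv F y)
      (deriv (deriv (deriv F)) x * x + deriv (deriv F) x - deriv (deriv F) x) x := by
    simpa [Pi.mul_def, Pi.sub_def] using (h3.mul (hasDerivAt_id x)).sub h2
  have hD : HasDerivAt (fun y : ℝ => y ^ 2) (2 * x) x := by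
    simpa using hasDerivAt_pow 2 x
  have hdiv := hN.div hD (pow_ne_zero 2 hx)
  rw [(show HasDerivAt (fun y => (deriv (deriv F) y * y - deriv F y) / y ^ 2) _ x from hdiv).deriv, (hasDerivAt_sphStep hF hx).deriv, d3_of_ODE hF hO hx]
  simp only [sphStep]
  rw [hO x hx]
  field_simp
  ring

lemma wronskian_step {m : ℝ} {F G : ℝ → ℝ} (hF : ContDiffOn ℝ ∞ F S)
    (hG : ContDiffOn ℝ ∞ G S) (hFO : ODE m F) (hGO : ODE m G) {x : ℝ} (hx : x ≠ 0) :
    sphStep F x * deriv (sphStep G) x - deriv (sphStep F) x * sphStep G x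
      = (F x * deriv G x - deriv F x * G x) / x ^ 2 := by
  rw [(hasDerivAt_sphStep hF hx).deriv, (hasDerivAt_sphStep hG hx).deriv]
  simp only [sphStep]
  rw [hFO x hx, hGO x hx]
  field_simp
  ring

lemma base_smooth {p : ℝ → ℝ} (hp : ContDiff ℝ ∞ p) :
    ContDiffOn ℝ ∞ (fun t => p t / t) S :=
  hp.contDiffOn.div contDiffOn_id (fun _ hx => hx)

lemma base_deriv {p : ℝ → ℝ} (hp : ∀ y, HasDerivAt p (deriv p y) y) {x : ℝ} (hx : x ≠ 0) :
    HasDerivAt (fun t => p t / t) ((deriv p x * x - p x) / x ^ 2) x := by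
  have := (hp x).div (hasDerivAt_id x) hx
  simpa [sq, Pi.div_def] using this

lemma base_ODE {p : ℝ → ℝ} (hp : ∀ y, HasDerivAt p (deriv p y) y)
    (hp2 : ∀ y, HasDerivAt (deriv p) (deriv (deriv p) y) y)
    (hpp : ∀ y, deriv (deriv p) y = - p y) :
    ODE 2 (fun t => p t / t) := by
  intro x hx
  have heq : deriv (fun t => p t / t) =ᶠ[𝓝 x] fun y => (deriv p y * y - p y) / y ^ 2 := by
    filter_upwards [isOpen_S.mem_nhds (mem_S hx)] with y hy
    exact (base_deriv hp hy).deriv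
  rw [heq.deriv_eq]
  have hN : HasDerivAt (fun y => deriv p y * y - p y)
      (deriv (deriv p) x * x + deriv p x - deriv p x) x := by
    simpa [Pi.mul_def, Pi.sub_def] using (((hp2 x).mul (hasDerivAt_id x)).sub (hp x))
  have hD : HasDerivAt (fun y : ℝ => y ^ 2) (2 * x) x := by simpa using hasDerivAt_pow 2 x
  have hdiv := hN.div hD (pow_ne_zero 2 hx)
  rw [(show HasDerivAt (fun y => (deriv p y * y - p y) / y ^ 2) _ x from hdiv).deriv, (base_deriv hp hx).deriv, hpp x]
  field_simp
  ring

noncomputable def Fs : ℝ → ℝ := fun t => Real.sin t / t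
noncomputable def Gc : ℝ → ℝ := fun t => Real.cos t / t

lemma sin_hd : ∀ y : ℝ, HasDerivAt Real.sin (deriv Real.sin y) y := by
  intro y; simpa [Real.deriv_sin] using Real.hasDerivAt_sin y

lemma cos_hd : ∀ y : ℝ, HasDerivAt Real.cos (deriv Real.cos y) y := by
  intro y; simpa [Real.deriv_cos'] using Real.hasDerivAt_cos y

lemma sin_hd2' (y : ℝ) : HasDerivAt (deriv Real.sin) (-Real.sin y) y := by
  rw [Real.deriv_sin]; exact Real.hasDerivAt_cos y

lemma sin_hd2 : ∀ y : ℝ, HasDerivAt (deriv Real.sin) (deriv (deriv Real.sin) y) y := by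
  intro y; rw [(sin_hd2' y).deriv]; exact sin_hd2' y

lemma sin_dd (y : ℝ) : deriv (deriv Real.sin) y = -Real.sin y := (sin_hd2' y).deriv

lemma cos_hd2' (y : ℝ) : HasDerivAt (deriv Real.cos) (-Real.cos y) y := by
  rw [Real.deriv_cos']; exact (Real.hasDerivAt_sin y).neg

lemma cos_hd2 : ∀ y : ℝ, HasDerivAt (deriv Real.cos) (deriv (deriv Real.cos) y) y := by
  intro y; rw [(cos_hd2' y).deriv]; exact cos_hd2' y

lemma cos_dd (y : ℝ) : deriv (deriv Real.cos) y = -Real.cos y := (cos_hd2' y).deriv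

lemma main (n : ℕ) :
    ContDiffOn ℝ ∞ (sphStep^[n] Fs) S ∧ ContDiffOn ℝ ∞ (sphStep^[n] Gc) S ∧
    ODE (2 * n + 2) (sphStep^[n] Fs) ∧ ODE (2 * n + 2) (sphStep^[n] Gc) ∧
    ∀ x : ℝ, x ≠ 0 →
      sphStep^[n] Fs x * deriv (sphStep^[n] Gc) x
        - deriv (sphStep^[n] Fs) x * sphStep^[n] Gc x = -(1 / x ^ (2 * n + 2)) := by
  induction n with
  | zero =>
    have h0F : ODE 2 Fs := base_ODE sin_hd sin_hd2 sin_dd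
    have h0G : ODE 2 Gc := base_ODE cos_hd cos_hd2 cos_dd
    refine ⟨base_smooth Real.contDiff_sin, base_smooth Real.contDiff_cos, ?_, ?_, ?_⟩
    · simpa using h0F
    · simpa using h0G
    · intro x hx
      have dF : deriv Fs x = (deriv Real.sin x * x - Real.sin x) / x ^ 2 :=
        (base_deriv sin_hd hx).deriv
      have dG : deriv Gc x = (deriv Real.cos x * x - Real.cos x) / x ^ 2 :=
        (base_deriv cos_hd hx).deriv
      simp only [Function.iterate_zero, id_eq]
      rw [dF, dG]
      simp only [Fs, Gc, Real.deriv_sin, Real.deriv_cos']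
      have h := Real.sin_sq_add_cos_sq x
      field_simp
      ring_nf
      linear_combination (-(x:ℝ)^3) * h
  | succ n ih =>
    obtain ⟨hFs, hGc, hFO, hGO, hW⟩ := ih
    have e1 : sphStep^[n+1] Fs = sphStep (sphStep^[n] Fs) := Function.iterate_succ_apply' _ _ _
    have e2 : sphStep^[n+1] Gc = sphStep (sphStep^[n] Gc) := Function.iterate_succ_apply' _ _ _
    rw [e1, e2]
    have hm : (2 * ((n:ℝ)+1) + 2) = (2 * n + 2) + 2 := by ring
    refine ⟨smooth_step hFs, smooth_step hGc, ?_, ?_, ?_⟩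
    · have := ODE_step hFs hFO; rw [show ((n:ℕ)+1 : ℕ) = n+1 from rfl]; push_cast; rw [hm]; exact this
    · have := ODE_step hGc hGO; push_cast; rw [hm]; exact this
    · intro x hx
      rw [wronskian_step hFs hGc hFO hGO hx, hW x hx]
      rw [show 2 * (n+1) + 2 = (2*n+2) + 2 by ring, pow_add]
      field_simp
      ring

end SphAux

/-- Wronskian identity: j_n(k)·h_n′(k) − j_n′(k)·h_n(k) = i/k². -/
theorem wronskian_jh (n : ℕ) (k : ℝ) (hk : k ≠ 0) :
    (sphj n k : ℂ) * sphh' n k - (sphj' n k : ℂ) * sphh n k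
      = Complex.I / (k : ℂ) ^ 2 := by
  obtain ⟨hFs, hGc, -, -, hW⟩ := SphAux.main n
  rw [show SphAux.Fs = (fun t => Real.sin t / t) from rfl,
    show SphAux.Gc = (fun t => Real.cos t / t) from rfl] at hW
  have hFd : HasDerivAt (sphStep^[n] (fun t => Real.sin t / t))
      (deriv (sphStep^[n] (fun t => Real.sin t / t)) k) k :=
    (SphAux.diffAt hFs hk).hasDerivAt
  have hGd : HasDerivAt (sphStep^[n] (fun t => Real.cos t / t))
      (deriv (sphStep^[n] (fun t => Real.cos t / t)) k) k :=
    (SphAux.diffAt hGc hk).hasDerivAt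
  have hpow : HasDerivAt (fun x : ℝ => (-x) ^ n) (((n : ℝ) * (-k) ^ (n - 1)) * (-1)) k := by
    have := (hasDerivAt_pow n (-k)).comp k (hasDerivAt_neg k)
    simpa [Function.comp_def] using this
  have hj : HasDerivAt (sphj n)
      ((((n : ℝ) * (-k) ^ (n - 1)) * (-1)) * (sphStep^[n] (fun t => Real.sin t / t)) k
        + (-k) ^ n * deriv (sphStep^[n] (fun t => Real.sin t / t)) k) k := hpow.mul hFd
  have hy : HasDerivAt (sphy n)
      (-((((n : ℝ) * (-k) ^ (n - 1)) * (-1)) * (sphStep^[n] (fun t => Real.cos t / t)) k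
        + (-k) ^ n * deriv (sphStep^[n] (fun t => Real.cos t / t)) k)) k := (hpow.mul hGd).neg
  have hj'e : sphj' n k = (((n : ℝ) * (-k) ^ (n - 1)) * (-1))
      * (sphStep^[n] (fun t => Real.sin t / t)) k
      + (-k) ^ n * deriv (sphStep^[n] (fun t => Real.sin t / t)) k := hj.deriv
  have hy'e : sphy' n k = -((((n : ℝ) * (-k) ^ (n - 1)) * (-1))
      * (sphStep^[n] (fun t => Real.cos t / t)) k
      + (-k) ^ n * deriv (sphStep^[n] (fun t => Real.cos t / t)) k) := hy.deriv
  have hB2 : ((-k) ^ n) ^ 2 = k ^ (2 * n) := by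
    rw [← pow_mul, mul_comm n 2, pow_mul, neg_sq, ← pow_mul]
  have hrealW : sphj n k * sphy' n k - sphj' n k * sphy n k = 1 / k ^ 2 := by
    have key : sphj n k * sphy' n k - sphj' n k * sphy n k
        = -(((-k) ^ n) ^ 2) * ((sphStep^[n] (fun t => Real.sin t / t)) k
            * deriv (sphStep^[n] (fun t => Real.cos t / t)) k
          - deriv (sphStep^[n] (fun t => Real.sin t / t)) k
            * (sphStep^[n] (fun t => Real.cos t / t)) k) := by
      rw [hj'e, hy'e]
      simp only [sphj, sphy]
      ring
    rw [key, hW k hk, hB2, show 2 * n + 2 = 2 * n + 2 from rfl, pow_add]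
    field_simp
  have h1 : HasDerivAt (sphj n) (sphj' n k) k := hj.differentiableAt.hasDerivAt
  have h2 : HasDerivAt (sphy n) (sphy' n k) k := hy.differentiableAt.hasDerivAt
  have hH : HasDerivAt (sphh n) ((sphj' n k : ℂ) + Complex.I * (sphy' n k : ℂ)) k :=
    (h1.ofReal_comp).add ((h2.ofReal_comp).const_mul Complex.I)
  have hh'e : sphh' n k = (sphj' n k : ℂ) + Complex.I * (sphy' n k : ℂ) := hH.deriv
  have hc : (sphj n k : ℂ) * (sphy' n k : ℂ) - (sphj' n k : ℂ) * (sphy n k : ℂ)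
      = 1 / (k : ℂ) ^ 2 := by exact_mod_cast hrealW
  rw [hh'e]
  simp only [sphh]
  linear_combination Complex.I * hc
end

section
/- For every natural number n ≥ 1, the eigenvalue of the combined Dirichlet (Burton–Miller) operator on the unit sphere with coupling factor η = i/k, namely λ_n(D)(k) = i·k·h_n(k)·(j_n(k) − i·j_n′(k)), satisfies lim_{k→0⁺} k·λ_n(D)(k) = −i·n/(2n+1); in particular |λ_n(D)(k)| → ∞ as k → 0⁺, so these eigenvalues diverge in the low-frequency limit. -/
open Real Complex Filter Topology

noncomputable section BesselAux

/-- Coefficients of the even power series for `(x⁻¹ d/dx)^n (sin x / x)`. -/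
def aa : ℕ → ℕ → ℝ
  | 0, m => (-1) ^ m / (Nat.factorial (2 * m + 1))
  | (n + 1), m => (2 * (m : ℝ) + 2) * aa n (m + 1)

lemma abs_aa_le (n m : ℕ) : |aa n m| ≤ 2 ^ n / (Nat.factorial m) := by
  induction n generalizing m with
  | zero =>
    simp only [aa, pow_zero]
    rw [abs_div, _root_.abs_pow, abs_neg, abs_one, one_pow, Nat.abs_cast]
    apply one_div_le_one_div_of_le
    · exact_mod_cast Nat.factorial_pos m
    · exact_mod_cast Nat.factorial_le (by omega)
  | succ n ih =>
    simp only [aa]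
    rw [abs_mul]
    have h1 : |2 * (m : ℝ) + 2| = 2 * (m : ℝ) + 2 := abs_of_pos (by positivity)
    rw [h1]
    calc (2 * (m : ℝ) + 2) * |aa n (m + 1)| ≤ (2 * (m : ℝ) + 2) * (2 ^ n / (Nat.factorial (m+1))) := by
          apply mul_le_mul_of_nonneg_left (ih (m+1)) (by positivity)
      _ = 2 ^ (n+1) / (Nat.factorial m) := by
          rw [Nat.factorial_succ]
          push_cast
          have h2 : ((m : ℝ) + 1) ≠ 0 := by positivity
          have h3 : (Nat.factorial m : ℝ) ≠ 0 := by exact_mod_cast (Nat.factorial_pos m).ne'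
          field_simp
          ring

lemma aa_formula (n m : ℕ) :
    aa n m = (-1) ^ (m + n) * 2 ^ n * (Nat.factorial (m + n)) /
      ((Nat.factorial m) * (Nat.factorial (2 * (m + n) + 1))) := by
  induction n generalizing m with
  | zero =>
    simp only [aa, Nat.add_zero, pow_zero, mul_one, one_mul]
    have h3 : (Nat.factorial m : ℝ) ≠ 0 := by exact_mod_cast (Nat.factorial_pos m).ne'
    have h4 : (Nat.factorial (2*m+1) : ℝ) ≠ 0 := by exact_mod_cast (Nat.factorial_pos _).ne'
    field_simp
  | succ n ih =>
    have key : m + (n + 1) = (m + 1) + n := by omega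
    simp only [aa, ih (m + 1)]
    rw [key]
    rw [Nat.factorial_succ m]
    have h3 : (Nat.factorial m : ℝ) ≠ 0 := by exact_mod_cast (Nat.factorial_pos m).ne'
    have h5 : (Nat.factorial (m+1+n) : ℝ) ≠ 0 := by exact_mod_cast (Nat.factorial_pos _).ne'
    have h4 : (Nat.factorial (2*(m+1+n)+1) : ℝ) ≠ 0 := by exact_mod_cast (Nat.factorial_pos _).ne'
    push_cast
    field_simp
    ring

lemma aa_zero (n : ℕ) :
    aa n 0 = (-1) ^ n * 2 ^ n * (Nat.factorial n) / (Nat.factorial (2 * n + 1)) := by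
  have := aa_formula n 0
  simpa using this


/-- Even power series. -/
def FF (n : ℕ) (x : ℝ) : ℝ := ∑' m : ℕ, aa n m * x ^ (2 * m)

lemma summable_mul_pow_div_factorial (c : ℝ) :
    Summable (fun m : ℕ => (m : ℝ) * c ^ m / (Nat.factorial m)) := by
  rw [← summable_nat_add_iff 1]
  have h := (Real.summable_pow_div_factorial c).mul_left c
  apply h.congr
  intro m
  have h3 : (Nat.factorial m : ℝ) ≠ 0 := by exact_mod_cast (Nat.factorial_pos m).ne'
  rw [Nat.factorial_succ]
  push_cast
  field_simp
  ring

lemma summable_FF (n : ℕ) (x : ℝ) : Summable (fun m : ℕ => aa n m * x ^ (2 * m)) := by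
  apply Summable.of_norm_bounded (g := fun m => 2 ^ n * ((x ^ 2) ^ m / (Nat.factorial m)))
    ((Real.summable_pow_div_factorial (x ^ 2)).mul_left _)
  intro m
  rw [Real.norm_eq_abs, abs_mul]
  have hx2 : |x ^ (2 * m)| = (x ^ 2) ^ m := by
    rw [pow_mul]; exact abs_of_nonneg (pow_nonneg (sq_nonneg x) m)
  rw [hx2]
  calc |aa n m| * (x ^ 2) ^ m ≤ (2 ^ n / (Nat.factorial m)) * (x ^ 2) ^ m :=
        mul_le_mul_of_nonneg_right (abs_aa_le n m) (by positivity)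
    _ = 2 ^ n * ((x ^ 2) ^ m / (Nat.factorial m)) := by ring

lemma deriv_term_bound (n m : ℕ) (y R : ℝ) (hR : 1 ≤ R) (hy : |y| ≤ R) :
    ‖aa n m * ((2 * m : ℕ) * y ^ (2 * m - 1))‖ ≤
      2 ^ (n + 1) * ((m : ℝ) * (R ^ 2) ^ m / (Nat.factorial m)) := by
  match m with
  | 0 => simp
  | (m + 1) =>
    rw [Real.norm_eq_abs, abs_mul, abs_mul, Nat.abs_cast, _root_.abs_pow]
    have hRpos : (0:ℝ) < R := lt_of_lt_of_le one_pos hR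
    have h2 : |y| ^ (2 * (m + 1) - 1) ≤ R ^ (2 * (m + 1)) := by
      calc |y| ^ (2 * (m + 1) - 1) ≤ R ^ (2 * (m + 1) - 1) :=
            pow_le_pow_left₀ (abs_nonneg y) hy _
        _ ≤ R ^ (2 * (m + 1)) := pow_le_pow_right₀ hR (by omega)
    have h3 : (Nat.factorial (m + 1) : ℝ) ≠ 0 := by exact_mod_cast (Nat.factorial_pos _).ne'
    calc |aa n (m + 1)| * ((2 * (m + 1) : ℕ) * |y| ^ (2 * (m + 1) - 1))
        ≤ (2 ^ n / (Nat.factorial (m + 1))) * ((2 * (m + 1) : ℕ) * R ^ (2 * (m + 1))) := by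
          apply mul_le_mul (abs_aa_le n _) ?_ (by positivity) (by positivity)
          exact mul_le_mul_of_nonneg_left h2 (by positivity)
      _ = 2 ^ (n + 1) * (((m + 1 : ℕ) : ℝ) * (R ^ 2) ^ (m + 1) / (Nat.factorial (m + 1))) := by
          rw [← pow_mul]
          push_cast
          field_simp
          ring

lemma summable_FF_deriv (n : ℕ) (x R : ℝ) (hR : 1 ≤ R) (hx : |x| ≤ R) :
    Summable (fun m : ℕ => aa n m * ((2 * m : ℕ) * x ^ (2 * m - 1))) :=
  Summable.of_norm_bounded
    (g := fun m : ℕ => 2 ^ (n + 1) * ((m : ℝ) * (R ^ 2) ^ m / (Nat.factorial m)))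
    ((summable_mul_pow_div_factorial (R ^ 2)).mul_left _)
    (fun m => deriv_term_bound n m x R hR hx)

lemma FF_hasDerivAt (n : ℕ) (x : ℝ) :
    HasDerivAt (FF n) (∑' m : ℕ, aa n m * ((2 * m : ℕ) * x ^ (2 * m - 1))) x := by
  set R := |x| + 1 with hRdef
  have hR : 1 ≤ R := by rw [hRdef]; linarith [abs_nonneg x]
  have hxmem : x ∈ Set.Ioo (-R) R := by
    refine Set.mem_Ioo.mpr (abs_lt.mp ?_)
    rw [hRdef]; linarith [abs_nonneg x]
  exact hasDerivAt_tsum_of_isPreconnected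
    (u := fun m : ℕ => 2 ^ (n + 1) * ((m : ℝ) * (R ^ 2) ^ m / (Nat.factorial m)))
    ((summable_mul_pow_div_factorial (R ^ 2)).mul_left _)
    (isOpen_Ioo (a := -R) (b := R)) (isPreconnected_Ioo)
    (fun m y _ => (hasDerivAt_pow (2 * m) y).const_mul (aa n m))
    (fun m y hy => deriv_term_bound n m y R hR
      (le_of_lt (abs_lt.mpr ⟨hy.1, hy.2⟩)))
    (Set.mem_Ioo.mpr ⟨by linarith [abs_nonneg x], by positivity⟩)
    (summable_FF n 0) hxmem


lemma FF_hasDerivAt' (n : ℕ) (x : ℝ) :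
    HasDerivAt (FF n) (x * FF (n + 1) x) x := by
  have h := FF_hasDerivAt n x
  have hsum : Summable (fun m : ℕ => aa n m * ((2 * m : ℕ) * x ^ (2 * m - 1))) :=
    summable_FF_deriv n x (|x| + 1) (by linarith [abs_nonneg x]) (by linarith)
  have key : (∑' m : ℕ, aa n m * ((2 * m : ℕ) * x ^ (2 * m - 1))) = x * FF (n + 1) x := by
    rw [Summable.tsum_eq_zero_add hsum]
    simp only [Nat.mul_zero, Nat.cast_zero, zero_mul, mul_zero, zero_add]
    rw [FF, ← tsum_mul_left]
    apply tsum_congr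
    intro m
    show aa n (m + 1) * (((2 * (m + 1) : ℕ) : ℝ) * x ^ (2 * (m + 1) - 1)) =
      x * (aa (n + 1) m * x ^ (2 * m))
    have h1 : 2 * (m + 1) - 1 = 2 * m + 1 := by omega
    rw [h1, aa]
    push_cast
    ring
  rwa [key] at h

lemma FF_continuousAt (n : ℕ) (x : ℝ) : ContinuousAt (FF n) x :=
  (FF_hasDerivAt' n x).continuousAt

lemma FF_zero (n : ℕ) : FF n 0 = aa n 0 := by
  rw [FF, tsum_eq_single 0]
  · simp
  · intro m hm
    rw [zero_pow (by omega), mul_zero]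

lemma FF_zero_eq (n : ℕ) (x : ℝ) (hx : x ≠ 0) : FF 0 x = Real.sin x / x := by
  rw [eq_div_iff hx, Real.sin_eq_tsum, FF, ← tsum_mul_right]
  apply tsum_congr
  intro m
  show aa 0 m * x ^ (2 * m) * x = (-1) ^ m * x ^ (2 * m + 1) / (Nat.factorial (2 * m + 1))
  rw [aa, pow_succ]
  ring


/-- Polynomials for the closed form of `(x⁻¹ d/dx)^n (cos x / x)`. -/
def PQ : ℕ → Polynomial ℝ × Polynomial ℝ
  | 0 => (1, 0)
  | (n + 1) =>
      (Polynomial.X * ((PQ n).1.derivative + (PQ n).2) - Polynomial.C (2 * (n:ℝ) + 1) * (PQ n).1,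
       Polynomial.X * ((PQ n).2.derivative - (PQ n).1) - Polynomial.C (2 * (n:ℝ) + 1) * (PQ n).2)

/-- Numerator of the closed form. -/
def NN (n : ℕ) (x : ℝ) : ℝ := (PQ n).1.eval x * Real.cos x + (PQ n).2.eval x * Real.sin x

lemma NN_hasDerivAt (n : ℕ) (x : ℝ) :
    HasDerivAt (NN n)
      (((PQ n).1.derivative.eval x + (PQ n).2.eval x) * Real.cos x +
       ((PQ n).2.derivative.eval x - (PQ n).1.eval x) * Real.sin x) x := by
  have h1 : HasDerivAt (fun y => (PQ n).1.eval y * Real.cos y)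
      ((PQ n).1.derivative.eval x * Real.cos x + (PQ n).1.eval x * (-Real.sin x)) x :=
    ((PQ n).1.hasDerivAt x).mul (Real.hasDerivAt_cos x)
  have h2 : HasDerivAt (fun y => (PQ n).2.eval y * Real.sin y)
      ((PQ n).2.derivative.eval x * Real.sin x + (PQ n).2.eval x * Real.cos x) x :=
    ((PQ n).2.hasDerivAt x).mul (Real.hasDerivAt_sin x)
  have := h1.add h2
  refine this.congr_deriv ?_
  ring

lemma NN_succ (n : ℕ) (x : ℝ) :
    NN (n + 1) x = x * (((PQ n).1.derivative.eval x + (PQ n).2.eval x) * Real.cos x +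
       ((PQ n).2.derivative.eval x - (PQ n).1.eval x) * Real.sin x) - (2 * n + 1) * NN n x := by
  simp only [NN, PQ, Polynomial.eval_sub, Polynomial.eval_mul, Polynomial.eval_X,
    Polynomial.eval_add, Polynomial.eval_C]
  ring

lemma PQ_one_eval_zero (n : ℕ) :
    (PQ n).1.eval 0 = (-1) ^ n * (Nat.factorial (2 * n)) / (2 ^ n * Nat.factorial n) := by
  induction n with
  | zero => simp [PQ]
  | succ n ih =>
    have h : (PQ (n + 1)).1.eval 0 = -(2 * (n:ℝ) + 1) * (PQ n).1.eval 0 := by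
      simp [PQ]; ring
    rw [h, ih]
    have e1 : 2 * (n + 1) = (2 * n + 1) + 1 := by omega
    rw [e1, Nat.factorial_succ, Nat.factorial_succ, Nat.factorial_succ]
    have h2 : ((Nat.factorial n : ℝ)) ≠ 0 := by exact_mod_cast (Nat.factorial_pos _).ne'
    push_cast
    field_simp
    ring

lemma NN_zero_eval (n : ℕ) :
    NN n 0 = (-1) ^ n * (Nat.factorial (2 * n)) / (2 ^ n * Nat.factorial n) := by
  rw [NN, Real.cos_zero, Real.sin_zero, mul_one, mul_zero, add_zero, PQ_one_eval_zero]


lemma NN_continuous (n : ℕ) : Continuous (NN n) :=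
  (((PQ n).1.continuous).mul Real.continuous_cos).add
    (((PQ n).2.continuous).mul Real.continuous_sin)

lemma NN_zero_form (x : ℝ) : NN 0 x = Real.cos x := by
  simp [NN, PQ]


lemma iterate_eq_of (g : ℝ → ℝ) (G : ℕ → ℝ → ℝ)
    (h0 : ∀ x : ℝ, x ≠ 0 → g x = G 0 x)
    (hstep : ∀ (n : ℕ) (x : ℝ), x ≠ 0 → HasDerivAt (G n) (x * G (n + 1) x) x) :
    ∀ (n : ℕ) (x : ℝ), x ≠ 0 → (sphStep^[n] g) x = G n x := by
  intro n
  induction n with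
  | zero => exact fun x hx => h0 x hx
  | succ n ih =>
    intro x hx
    rw [Function.iterate_succ_apply']
    show deriv (sphStep^[n] g) x / x = G (n + 1) x
    have hev : sphStep^[n] g =ᶠ[𝓝 x] G n := by
      filter_upwards [eventually_ne_nhds hx] with y hy using ih y hy
    rw [hev.deriv_eq, (hstep n x hx).deriv, mul_comm, mul_div_assoc, div_self hx, mul_one]

lemma sphj_eq (n : ℕ) (x : ℝ) (hx : x ≠ 0) : sphj n x = (-x) ^ n * FF n x := by
  rw [sphj, iterate_eq_of (fun t => Real.sin t / t) FF
    (fun y hy => (FF_zero_eq 0 y hy).symm)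
    (fun m y _ => FF_hasDerivAt' m y) n x hx]

/-- The closed form for the cosine side. -/
noncomputable def GG (n : ℕ) (x : ℝ) : ℝ := NN n x / x ^ (2 * n + 1)

lemma GG_hasDerivAt (n : ℕ) (x : ℝ) (hx : x ≠ 0) :
    HasDerivAt (GG n) (x * GG (n + 1) x) x := by
  have hD := NN_hasDerivAt n x
  have hrec := NN_succ n x
  have hpow : HasDerivAt (fun y : ℝ => y ^ (2 * n + 1))
      (((2 * n + 1 : ℕ) : ℝ) * x ^ (2 * n + 1 - 1)) x := hasDerivAt_pow _ x
  have hdiv := hD.div hpow (pow_ne_zero _ hx)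
  refine hdiv.congr_deriv ?_
  rw [GG, hrec]
  have h1 : 2 * n + 1 - 1 = 2 * n := by omega
  rw [h1]
  have h2 : 2 * (n + 1) + 1 = 2 * n + 3 := by omega
  rw [h2]
  push_cast
  field_simp
  ring

lemma sphy_eq (n : ℕ) (x : ℝ) (hx : x ≠ 0) :
    sphy n x = -((-x) ^ n * (NN n x / x ^ (2 * n + 1))) := by
  rw [sphy, iterate_eq_of (fun t => Real.cos t / t) GG ?_
    (fun m y hy => GG_hasDerivAt m y hy) n x hx]
  · rfl
  · intro y hy
    show Real.cos y / y = GG 0 y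
    rw [GG, NN_zero_form]
    norm_num

lemma sphj'_eq_s11 (n : ℕ) (x : ℝ) (hx : x ≠ 0) :
    sphj' n x = (n : ℝ) * (-x) ^ (n - 1) * (-1) * FF n x + (-x) ^ n * (x * FF (n + 1) x) := by
  have hev : sphj n =ᶠ[𝓝 x] (fun y => (-y) ^ n * FF n y) := by
    filter_upwards [eventually_ne_nhds hx] with y hy using sphj_eq n y hy
  have hneg : HasDerivAt (fun y : ℝ => (-y) ^ n) ((n : ℝ) * (-x) ^ (n - 1) * (-1)) x := by
    have := (hasDerivAt_pow n (-x)).comp x (hasDerivAt_neg x)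
    exact this
  have hmul := hneg.mul (FF_hasDerivAt' n x)
  rw [sphj', hev.deriv_eq]; exact hmul.deriv


end BesselAux

/-- Burton–Miller Dirichlet eigenvalue with η = i/k,
λ_n(D)(k) = i·k·h_n(k)·(j_n(k) − i·j_n′(k)): k·λ_n(D)(k) → −i·n/(2n+1) as k → 0⁺,
and |λ_n(D)(k)| → ∞ as k → 0⁺. -/
theorem dirichlet_BM_eigenvalue_diverges (n : ℕ) (hn : 1 ≤ n) :
    Filter.Tendsto
      (fun k : ℝ => (k : ℂ) *
        (Complex.I * (k : ℂ) * sphh n k * ((sphj n k : ℂ) - Complex.I * (sphj' n k : ℂ))))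
      (𝓝[>] (0 : ℝ)) (𝓝 (-Complex.I * (n : ℂ) / (2 * (n : ℂ) + 1))) ∧
    Filter.Tendsto
      (fun k : ℝ =>
        ‖Complex.I * (k : ℂ) * sphh n k * ((sphj n k : ℂ) - Complex.I * (sphj' n k : ℂ))‖)
      (𝓝[>] (0 : ℝ)) Filter.atTop := by
  obtain ⟨m, rfl⟩ : ∃ m, n = m + 1 := ⟨n - 1, by omega⟩
  set n := m + 1 with hndef
  -- auxiliary real functions
  set Φ : ℝ → ℝ := fun k => (-1 : ℝ) ^ n * FF n k with hΦ
  set Ψ : ℝ → ℝ := fun k => (-1 : ℝ) ^ n * ((n : ℝ) * FF n k + k ^ 2 * FF (n + 1) k) with hΨ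
  set Υ : ℝ → ℝ := fun k => (-1 : ℝ) ^ (n + 1) * NN n k with hΥ
  set A : ℝ → ℝ := fun k => k ^ (2 * n + 2) * (Φ k) ^ 2 + Υ k * Ψ k with hA
  set B : ℝ → ℝ := fun k => k * Υ k * Φ k - k ^ (2 * n + 1) * Φ k * Ψ k with hB
  set G : ℝ → ℂ := fun k => Complex.I * ((A k : ℂ) + Complex.I * (B k : ℂ)) with hG
  have hI2 : (Complex.I) ^ 2 = -1 := Complex.I_sq
  have hI3 : (Complex.I) ^ 3 = -Complex.I := by
    rw [pow_succ, hI2]; ring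
  have hneg2C : ((-1 : ℂ)) ^ (m * 2) = 1 := by
    rw [pow_mul']; norm_num
  have hneg4C : ((-1 : ℂ)) ^ (m * 4) = 1 := by
    rw [pow_mul']; norm_num
  have hneg2R : ((-1 : ℝ)) ^ (m * 2) = 1 := by
    rw [pow_mul']; norm_num
  have hneg4R : ((-1 : ℝ)) ^ (m * 4) = 1 := by
    rw [pow_mul']; norm_num
  -- pointwise identity on (0, ∞)
  have hpt : ∀ k : ℝ, 0 < k →
      (k : ℂ) * (Complex.I * (k : ℂ) * sphh n k *
        ((sphj n k : ℂ) - Complex.I * (sphj' n k : ℂ))) = G k := by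
    intro k hk
    have hk0 : k ≠ 0 := ne_of_gt hk
    have hkC : (k : ℂ) ≠ 0 := by exact_mod_cast hk0
    rw [sphh, sphj_eq n k hk0, sphy_eq n k hk0, sphj'_eq_s11 n k hk0, hG, hA, hB, hΦ, hΨ, hΥ]
    simp only [hndef, Nat.add_sub_cancel]
    push_cast
    field_simp
    ring_nf
    simp only [hI2, hI3, hneg2C, hneg4C]
    ring
  -- limits of A and B
  have hΦc : ContinuousAt Φ 0 := (continuousAt_const.mul (FF_continuousAt n 0))
  have hΨc : ContinuousAt Ψ 0 := by
    apply continuousAt_const.mul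
    exact (continuousAt_const.mul (FF_continuousAt n 0)).add
      ((continuousAt_id.pow 2).mul (FF_continuousAt (n + 1) 0))
  have hΥc : ContinuousAt Υ 0 := (continuousAt_const.mul (NN_continuous n).continuousAt)
  have hAc : ContinuousAt A 0 :=
    ((continuousAt_id.pow _).mul (hΦc.pow 2)).add (hΥc.mul hΨc)
  have hBc : ContinuousAt B 0 :=
    ((continuousAt_id.mul hΥc).mul hΦc).sub (((continuousAt_id.pow _).mul hΦc).mul hΨc)
  have hA0 : A 0 = -(n : ℝ) / (2 * n + 1) := by
    have hfact : ((Nat.factorial (2 * n + 1) : ℝ)) = (2 * (n : ℝ) + 1) * Nat.factorial (2 * n) := by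
      rw [Nat.factorial_succ]; push_cast; ring
    have h1 : (Nat.factorial n : ℝ) ≠ 0 := by exact_mod_cast (Nat.factorial_pos _).ne'
    have h2 : (Nat.factorial (2 * n) : ℝ) ≠ 0 := by exact_mod_cast (Nat.factorial_pos _).ne'
    have h3 : (2 * (n : ℝ) + 1) ≠ 0 := by positivity
    simp only [hA, hΥ, hΨ, hΦ]
    rw [zero_pow (by omega : 2 * n + 2 ≠ 0), NN_zero_eval, FF_zero, aa_zero, hfact]
    simp only [hndef]
    push_cast
    field_simp
    ring_nf
    simp only [hneg2R, hneg4R]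
    ring
  have hB0 : B 0 = 0 := by
    simp only [hB, hΥ, hΨ, hΦ]
    rw [zero_pow (by omega : 2 * n + 1 ≠ 0)]
    ring
  have hAten : Tendsto A (𝓝[>] (0:ℝ)) (𝓝 (-(n : ℝ) / (2 * n + 1))) := by
    have := hAc.continuousWithinAt.tendsto (s := Set.Ioi (0:ℝ))
    rwa [hA0] at this
  have hBten : Tendsto B (𝓝[>] (0:ℝ)) (𝓝 0) := by
    have := hBc.continuousWithinAt.tendsto (s := Set.Ioi (0:ℝ))
    rwa [hB0] at this
  have hnC : (2 * (n : ℂ) + 1) ≠ 0 := by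
    have hcast : ((2 * n + 1 : ℕ) : ℂ) = 2 * (n : ℂ) + 1 := by push_cast; ring
    rw [← hcast]
    exact Nat.cast_ne_zero.mpr (by omega)
  have hGten : Tendsto G (𝓝[>] (0:ℝ)) (𝓝 (-Complex.I * (n : ℂ) / (2 * (n : ℂ) + 1))) := by
    have hca : Tendsto (fun k => (A k : ℂ)) (𝓝[>] (0:ℝ))
        (𝓝 ((-(n : ℝ) / (2 * n + 1) : ℝ) : ℂ)) :=
      (Complex.continuous_ofReal.tendsto _).comp hAten
    have hcb : Tendsto (fun k => (B k : ℂ)) (𝓝[>] (0:ℝ)) (𝓝 ((0 : ℝ) : ℂ)) :=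
      (Complex.continuous_ofReal.tendsto _).comp hBten
    have h := (hca.add (hcb.const_mul Complex.I)).const_mul Complex.I
    have hval : Complex.I * ((((-(n : ℝ) / (2 * n + 1) : ℝ)) : ℂ) + Complex.I * ((0:ℝ) : ℂ)) =
        -Complex.I * (n : ℂ) / (2 * (n : ℂ) + 1) := by
      push_cast
      field_simp
      ring
    rwa [hval] at h
  have heq : (fun k : ℝ => (k : ℂ) * (Complex.I * (k : ℂ) * sphh n k *
        ((sphj n k : ℂ) - Complex.I * (sphj' n k : ℂ)))) =ᶠ[𝓝[>] (0:ℝ)] G :=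
    eventually_nhdsWithin_of_forall (fun k hk => hpt k hk)
  constructor
  · exact hGten.congr' heq.symm
  · -- the norm blows up
    have hnormval : ‖-Complex.I * (n : ℂ) / (2 * (n : ℂ) + 1)‖ = (n : ℝ) / (2 * n + 1) := by
      rw [norm_div, norm_mul, norm_neg, Complex.norm_I, one_mul]
      have h2 : (2 * (n : ℂ) + 1) = ((2 * (n : ℝ) + 1 : ℝ) : ℂ) := by push_cast; ring
      rw [h2, Complex.norm_real, Complex.norm_natCast, Real.norm_eq_abs,
        abs_of_pos (by positivity)]
    have hnormG : Tendsto (fun k => ‖G k‖) (𝓝[>] (0:ℝ)) (𝓝 ((n : ℝ) / (2 * n + 1))) := by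
      have := (continuous_norm.tendsto _).comp hGten
      rwa [hnormval] at this
    have hinv : Tendsto (fun k : ℝ => k⁻¹) (𝓝[>] (0:ℝ)) atTop := tendsto_inv_nhdsGT_zero
    have hpos : (0:ℝ) < (n : ℝ) / (2 * n + 1) := by positivity
    have hprod : Tendsto (fun k : ℝ => ‖G k‖ * k⁻¹) (𝓝[>] (0:ℝ)) atTop :=
      Filter.Tendsto.pos_mul_atTop hpos hnormG hinv
    apply hprod.congr'
    filter_upwards [self_mem_nhdsWithin] with k hk
    have hk0 : (k : ℝ) ≠ 0 := ne_of_gt hk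
    rw [← hpt k hk, norm_mul, Complex.norm_real, Real.norm_eq_abs, abs_of_pos hk]
    field_simp
end
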